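/- Let A be an algebra in which for every pair of distinct elements a ≠ b and c ≠ d there exists a pair u ≠ v with {a,b} ⇒_ℓ {u,v} and {c,d} ⇒_ℓ {u,v} (a fixed ℓ). If |A| > m ≥ 2, then setting L = C(m+1,2) and choosing any (m+1)-element subset U ⊆ A, there is a pair u ≠ v such that {a,b} ⇒_{ℓ·⌈log₂ L⌉} {u,v} for all distinct a, b ∈ U. -/

import Mathlib

/-! An algebra is a type `A` with a family of finitary operations
`op i : (Fin (ar i) → A) → A` indexed by `i : ι`. -/

section Algebra

variable {A : Type*} {ι : Type*} {ar : ι → ℕ}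

/-- A binary relation on `A` is compatible with the operations. -/
def IsCompatible (op : ∀ i, (Fin (ar i) → A) → A) (θ : A → A → Prop) : Prop :=
  ∀ i (f g : Fin (ar i) → A), (∀ j, θ (f j) (g j)) → θ (op i f) (op i g)

/-- A congruence of the algebra: a compatible equivalence relation. -/
def IsCong (op : ∀ i, (Fin (ar i) → A) → A) (θ : A → A → Prop) : Prop :=
  Equivalence θ ∧ IsCompatible op θ

/-- `Cg op a b` is the principal congruence generated by the pair `(a, b)`:
the smallest congruence containing it. -/
def Cg (op : ∀ i, (Fin (ar i) → A) → A) (a b : A) : A → A → Prop :=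
  fun x y => ∀ θ : A → A → Prop, IsCong op θ → θ a b → θ x y

/-- A basic translation: a fundamental operation with all but one argument fixed. -/
def IsBasicTranslation (op : ∀ i, (Fin (ar i) → A) → A) (f : A → A) : Prop :=
  ∃ (i : ι) (j : Fin (ar i)) (p : Fin (ar i) → A),
    f = fun x => op i (Function.update p j x)

/-- `IsTranslation op k f`: `f` is a `k`-translation, i.e. a composition of at
most `k` basic translations (the identity is the unique `0`-translation). -/
inductive IsTranslation (op : ∀ i, (Fin (ar i) → A) → A) : ℕ → (A → A) → Prop
  | id : IsTranslation op 0 id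
  | mono {k f} : IsTranslation op k f → IsTranslation op (k + 1) f
  | comp {k f g} : IsBasicTranslation op g → IsTranslation op k f →
      IsTranslation op (k + 1) (g ∘ f)

/-- `{a, b} →ₖ {c, d}`: some `k`-translation maps `{a, b}` onto `{c, d}`. -/
def TrArrow (op : ∀ i, (Fin (ar i) → A) → A) (k : ℕ) (a b c d : A) : Prop :=
  ∃ f : A → A, IsTranslation op k f ∧ ({f a, f b} : Set A) = {c, d}

/-- `{a, b} ⇒_{k,n} {c, d}`: there is a chain `c = c₀, c₁, …, cₙ = d` in which
each link is trivial or the image of `{a, b}` under a `k`-translation. -/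
def TrChain (op : ∀ i, (Fin (ar i) → A) → A) (k n : ℕ) (a b c d : A) : Prop :=
  ∃ e : Fin (n + 1) → A, e 0 = c ∧ e (Fin.last n) = d ∧
    ∀ i : Fin n, e i.castSucc = e i.succ ∨ TrArrow op k a b (e i.castSucc) (e i.succ)

/-- `{a, b} ⇒ₖ {c, d}`: `{a, b} ⇒_{k,n} {c, d}` for some `n`. -/
def TrReach (op : ∀ i, (Fin (ar i) → A) → A) (k : ℕ) (a b c d : A) : Prop :=
  ∃ n : ℕ, TrChain op k n a b c d

end Algebra

section Aux

variable {A : Type*} {ι : Type*} {ar : ι → ℕ} (op : ∀ i, (Fin (ar i) → A) → A)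

lemma isTranslation_id (k : ℕ) : IsTranslation op k (id : A → A) := by
  induction k with
  | zero => exact .id
  | succ k ih => exact .mono ih

lemma isTranslation_comp {j : ℕ} {g : A → A} (hg : IsTranslation op j g) :
    ∀ {k : ℕ} {f : A → A}, IsTranslation op k f → IsTranslation op (k + j) (f ∘ g) := by
  intro k f hf
  induction hf with
  | id => simpa using hg
  | @mono k f h ih =>
      have : k + 1 + j = (k + j) + 1 := by omega
      rw [this]; exact .mono ih
  | @comp k f g' hb h ih =>
      have h1 : k + 1 + j = (k + j) + 1 := by omega
      have h2 : (g' ∘ f) ∘ g = g' ∘ (f ∘ g) := rfl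
      rw [h1, h2]; exact .comp hb ih

lemma trArrow_swap {k : ℕ} {a b c d : A} (h : TrArrow op k a b c d) :
    TrArrow op k b a c d := by
  obtain ⟨f, hf, he⟩ := h
  exact ⟨f, hf, by rw [Set.pair_comm]; exact he⟩

lemma trArrow_symm {k : ℕ} {a b c d : A} (h : TrArrow op k a b c d) :
    TrArrow op k a b d c := by
  obtain ⟨f, hf, he⟩ := h
  exact ⟨f, hf, by rw [he, Set.pair_comm]⟩

lemma trArrow_mono {k : ℕ} {a b c d : A} (h : TrArrow op k a b c d) :
    TrArrow op (k + 1) a b c d := by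
  obtain ⟨f, hf, he⟩ := h
  exact ⟨f, hf.mono, he⟩

/-- `TrReach` as a reflexive-transitive closure. -/
def RR (k : ℕ) (a b : A) : A → A → Prop :=
  Relation.ReflTransGen (fun x y => TrArrow op k a b x y)

lemma trReach_iff {k : ℕ} {a b c d : A} :
    TrReach op k a b c d ↔ RR op k a b c d := by
  constructor
  · rintro ⟨n, e, h0, hl, hstep⟩
    have key : ∀ i : Fin (n + 1), RR op k a b (e 0) (e i) := by
      intro i
      induction i using Fin.induction with
      | zero => exact Relation.ReflTransGen.refl
      | succ i ih =>
          rcases hstep i with h | h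
          · rw [← h]; exact ih
          · exact ih.tail h
    rw [← h0, ← hl]; exact key _
  · intro h
    induction h with
    | refl => exact ⟨0, fun _ => c, rfl, rfl, fun i => i.elim0⟩
    | @tail w x hcw hwx ih =>
        obtain ⟨n, e, h0, hl, hs⟩ := ih
        refine ⟨n + 1, Fin.snoc e x, ?_, ?_, ?_⟩
        · rw [show (0 : Fin (n + 2)) = Fin.castSucc 0 from rfl, Fin.snoc_castSucc]
          exact h0
        · simp [Fin.snoc_last]
        · intro i
          induction i using Fin.lastCases with
          | last =>
              right
              have e1 : (Fin.last n).castSucc = Fin.castSucc (Fin.last n) := rfl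
              rw [show (Fin.last n).succ = Fin.last (n + 1) from rfl,
                Fin.snoc_last, Fin.snoc_castSucc, hl]
              exact hwx
          | cast j =>
              rw [Fin.succ_castSucc, Fin.snoc_castSucc, Fin.snoc_castSucc]
              exact hs j

lemma rr_self {k : ℕ} (a b : A) : RR op k a b a b :=
  Relation.ReflTransGen.single ⟨id, isTranslation_id op k, rfl⟩

lemma rr_self_swap {k : ℕ} (a b : A) : RR op k a b b a :=
  Relation.ReflTransGen.single ⟨id, isTranslation_id op k, Set.pair_comm a b⟩

lemma rr_mono {k k' : ℕ} (h : k ≤ k') {a b c d : A} (hr : RR op k a b c d) :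
    RR op k' a b c d := by
  induction k', h using Nat.le_induction with
  | base => exact hr
  | succ n hn ih =>
      exact Relation.ReflTransGen.mono (fun x y hxy => trArrow_mono op hxy) _ _ ih

lemma rr_symm {k : ℕ} {a b c d : A} (h : RR op k a b c d) : RR op k a b d c :=
  by haveI : Std.Symm (fun x y => TrArrow op k a b x y) := ⟨fun x y hxy => trArrow_symm op hxy⟩
     exact Relation.ReflTransGen.stdSymm.symm _ _ h

lemma rr_map {j k : ℕ} {f : A → A} (hf : IsTranslation op k f) {a b c d : A}
    (h : RR op j a b c d) : RR op (k + j) a b (f c) (f d) := by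
  refine Relation.ReflTransGen.lift f ?_ _ _ h
  rintro x y ⟨g, hg, he⟩
  refine ⟨f ∘ g, isTranslation_comp op hg hf, ?_⟩
  simp only [Function.comp_apply]
  rw [← Set.image_pair, he, Set.image_pair]

lemma rr_step_trans {j k : ℕ} {a b c d x y : A} (h1 : RR op j a b c d)
    (h2 : TrArrow op k c d x y) : RR op (j + k) a b x y := by
  obtain ⟨f, hf, he⟩ := h2
  have hm : RR op (j + k) a b (f c) (f d) := by
    rw [Nat.add_comm]; exact rr_map op hf h1
  rcases Set.pair_eq_pair_iff.mp he with ⟨hx, hy⟩ | ⟨hx, hy⟩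
  · rwa [hx, hy] at hm
  · rw [hx, hy] at hm; exact rr_symm op hm

lemma rr_trans {j k : ℕ} {a b c d u v : A} (h1 : RR op j a b c d)
    (h2 : RR op k c d u v) : RR op (j + k) a b u v := by
  induction h2 with
  | refl => exact Relation.ReflTransGen.refl
  | @tail w x hcw hwx ih => exact ih.trans (rr_step_trans op h1 hwx)

lemma merge_main [DecidableEq A] (ℓ : ℕ)
    (hpair : ∀ a b c d : A, a ≠ b → c ≠ d →
      ∃ u v : A, u ≠ v ∧ TrReach op ℓ a b u v ∧ TrReach op ℓ c d u v) :
    ∀ t : ℕ, ∀ S : Finset (Finset A), (∃ x y : A, x ≠ y) →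
      (∀ s ∈ S, s.card = 2) → S.card ≤ 2 ^ t →
      ∃ u v : A, u ≠ v ∧ ∀ s ∈ S, ∀ a b : A, s = {a, b} →
        RR op (ℓ * t) a b u v := by
  intro t
  induction t with
  | zero =>
      intro S hxy h2 hcard
      rcases S.eq_empty_or_nonempty with hS | ⟨s, hs⟩
      · obtain ⟨x, y, hxy⟩ := hxy
        exact ⟨x, y, hxy, by simp [hS]⟩
      · obtain ⟨u, v, huv, hsuv⟩ := Finset.card_eq_two.mp (h2 s hs)
        refine ⟨u, v, huv, ?_⟩
        intro s' hs' a b hab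
        have hss : s' = s := by
          have hone : S.card ≤ 1 := by simpa using hcard
          exact Finset.card_le_one.mp hone s' hs' s hs
        have key : ({a, b} : Finset A) = {u, v} := by rw [← hab, hss, hsuv]
        have hu : u = a ∨ u = b := by
          have : u ∈ ({a, b} : Finset A) := by rw [key]; simp
          simpa using this
        have hv : v = a ∨ v = b := by
          have : v ∈ ({a, b} : Finset A) := by rw [key]; simp
          simpa using this
        rcases hu with hu | hu <;> rcases hv with hv | hv
        · exact absurd (hu.trans hv.symm) huv
        · rw [hu, hv]; exact rr_self op a b
        · rw [hu, hv]; exact rr_self_swap op a b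
        · exact absurd (hu.trans hv.symm) huv
  | succ t ih =>
      intro S hxy h2 hcard
      obtain ⟨S₁, hsub, hc1⟩ :=
        Finset.exists_subset_card_eq (s := S) (n := min S.card (2 ^ t)) (min_le_left _ _)
      set S₂ := S \ S₁ with hS₂
      have hc1' : S₁.card ≤ 2 ^ t := by rw [hc1]; exact min_le_right _ _
      have hc2 : S₂.card ≤ 2 ^ t := by
        have hcs : S₂.card = S.card - S₁.card := Finset.card_sdiff_of_subset hsub
        have hp : (2 : ℕ) ^ (t + 1) = 2 ^ t * 2 := pow_succ 2 t
        omega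
      obtain ⟨u₁, v₁, hne₁, H₁⟩ :=
        ih S₁ hxy (fun s hs => h2 s (hsub hs)) hc1'
      obtain ⟨u₂, v₂, hne₂, H₂⟩ :=
        ih S₂ hxy (fun s hs => h2 s (Finset.mem_sdiff.mp hs).1) hc2
      obtain ⟨u, v, huv, hr₁, hr₂⟩ := hpair u₁ v₁ u₂ v₂ hne₁ hne₂
      rw [trReach_iff] at hr₁ hr₂
      refine ⟨u, v, huv, ?_⟩
      intro s hs a b hab
      have hmul : ℓ * (t + 1) = ℓ * t + ℓ := by ring
      rw [hmul]
      by_cases h1 : s ∈ S₁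
      · exact rr_trans op (H₁ s h1 a b hab) hr₁
      · have h2' : s ∈ S₂ := Finset.mem_sdiff.mpr ⟨hs, h1⟩
        exact rr_trans op (H₂ s h2' a b hab) hr₂

end Aux
theorem stmt_19 {A : Type*} {ι : Type*} {ar : ι → ℕ}
    (op : ∀ i, (Fin (ar i) → A) → A) (ℓ m : ℕ) (hm : 2 ≤ m)
    (hcard : m < Nat.card A ∨ Infinite A)
    (hpair : ∀ a b c d : A, a ≠ b → c ≠ d →
      ∃ u v : A, u ≠ v ∧ TrReach op ℓ a b u v ∧ TrReach op ℓ c d u v)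
    (U : Finset A) (hU : U.card = m + 1) :
    ∃ u v : A, u ≠ v ∧ ∀ a ∈ U, ∀ b ∈ U, a ≠ b →
      TrReach op (ℓ * Nat.clog 2 (Nat.choose (m + 1) 2)) a b u v := by
  classical
  have hxy : ∃ x y : A, x ≠ y := by
    have h1 : 1 < U.card := by omega
    obtain ⟨x, hx, y, hy, hne⟩ := Finset.one_lt_card.mp h1
    exact ⟨x, y, hne⟩
  set t := Nat.clog 2 (Nat.choose (m + 1) 2) with ht
  have hScard : (U.powersetCard 2).card = Nat.choose (m + 1) 2 := by
    rw [Finset.card_powersetCard, hU]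
  have hle : (U.powersetCard 2).card ≤ 2 ^ t := by
    rw [hScard]; exact Nat.le_pow_clog one_lt_two _
  have h2 : ∀ s ∈ U.powersetCard 2, s.card = 2 := by
    intro s hs; exact (Finset.mem_powersetCard.mp hs).2
  obtain ⟨u, v, huv, H⟩ := merge_main op ℓ hpair t (U.powersetCard 2) hxy h2 hle
  refine ⟨u, v, huv, ?_⟩
  intro a ha b hb hab
  have hs : ({a, b} : Finset A) ∈ U.powersetCard 2 :=
    Finset.mem_powersetCard.mpr
      ⟨Finset.insert_subset ha (Finset.singleton_subset_iff.mpr hb),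
       Finset.card_pair hab⟩
  exact (trReach_iff op).mpr (H _ hs a b rfl)
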